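/- arXiv:1506.08401 — 3 statements merged into one kernel-verified Lean document; each statement's English description precedes it below -/
import Mathlib

section
/- Let p ≥ 5, f ≥ 2, e = p^f − 1, ν = e/(p−1) − 1 = p + p² + ⋯ + p^{f−1}. Let (α_i)_{i∈ℤ} be a 2f-periodic sequence with values in [0, e−1] and (h_i) a 2f-periodic sequence with h_i ∈ [0, p−1] and h_{i+f} = p−1−h_i, satisfying α_{i+1} ≡ p·α_i + h_i (mod e). Define ε_i = 1 if h_i = p−1 and 0 otherwise, and define the symbol X_i to be AB if α_i ∈ [ν/p + ε_{i+f}, (p−1)ν/p − ε_i) and O if α_i ∈ (ν, e). Assume moreover that α_{i+1} = p·α_i + h_i whenever α_i ≤ (p−1)ν/p − ε_i. Then for every i: if X_i = AB then X_{i+1} = O, i.e. if ν/p + ε_{i+f} ≤ α_i < (p−1)ν/p − ε_i then ν < α_{i+1} < e. -/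
/-! Below the threshold the recurrence holds without reduction, so `α_{i+1} = p α_i + h_i` and
the two bounds are plain arithmetic. The lower bound `p α_i + h_i > p (ν/p) = ν` needs the
extra `ε_{i+f}` exactly when `h_i = 0`. The upper bound uses `e = (p - 1) ν + (p - 1)`
(a geometric sum): `α_i < (p - 1) ν/p` gives `p α_i + h_i ≤ (p - 1) ν - p + (p - 1) < e`. -/

lemma lt_mul_add_of_add_ite_le {p a b h : ℤ} (hp : 0 < p) (hh : 0 ≤ h)
    (hab : b + (if h = 0 then 1 else 0) ≤ a) : p * b < p * a + h := by
  rcases hh.eq_or_lt with rfl | hpos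
  · simp only [if_true, add_zero] at hab ⊢
    exact mul_lt_mul_of_pos_left (by omega) hp
  · rw [if_neg hpos.ne'] at hab
    nlinarith

lemma mul_add_lt_of_lt_sub_one_mul {p a b h : ℤ} (hp : 0 < p) (hh : h ≤ p - 1)
    (ha : a < (p - 1) * b) : p * a + h < (p - 1) * (p * b) + (p - 1) := by
  have : p * a ≤ p * ((p - 1) * b - 1) := mul_le_mul_of_nonneg_left (by omega) hp.le
  nlinarith

theorem stmt_3_general (p : ℤ) (hp : 5 ≤ p) (f : ℕ) (hf : 2 ≤ f)
    (e ν νp : ℤ) (he : e = p ^ f - 1)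
    (hν : ν = ∑ j ∈ Finset.Ico 1 f, p ^ j) (hνp : ν = p * νp)
    (α h ε : ℤ → ℤ)
    (hhbound : ∀ i, 0 ≤ h i ∧ h i ≤ p - 1)
    (hhf : ∀ i, h (i + f) = p - 1 - h i)
    (hε : ∀ i, ε i = if h i = p - 1 then 1 else 0)
    (heq : ∀ i, α i ≤ (p - 1) * νp - ε i → α (i + 1) = p * α i + h i) :
    ∀ i, νp + ε (i + f) ≤ α i → α i < (p - 1) * νp - ε i →
      ν < α (i + 1) ∧ α (i + 1) < e := by
  intro i hlow hhigh
  have hp0 : 0 < p := by omega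
  have he' : e = (p - 1) * ν + (p - 1) := by
    rw [he, hν, mul_comm, geom_sum_Ico_mul p (by omega : 1 ≤ f)]
    ring
  have hεf : ε (i + f) = if h i = 0 then 1 else 0 := by
    simp only [hε, hhf, sub_eq_self]
  have hε_nonneg : 0 ≤ ε i := by
    rw [hε]
    split_ifs <;> norm_num
  rw [heq i hhigh.le, he', hνp]
  exact ⟨lt_mul_add_of_add_ite_le hp0 (hhbound i).1 (hεf ▸ hlow),
    mul_add_lt_of_lt_sub_one_mul hp0 (hhbound i).2 (by omega)⟩

/-- Lemma 2.1.4 (i), abstract form: if `X_i = AB`, i.e.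
`ν/p + ε_{i+f} ≤ α_i < (p-1)ν/p - ε_i`, then `X_{i+1} = O`, i.e. `ν < α_{i+1} < e`. -/
theorem stmt_3 (p : ℤ) (hp : 5 ≤ p) (f : ℕ) (hf : 2 ≤ f)
    (e ν νp : ℤ) (he : e = p ^ f - 1)
    (hν : ν = ∑ j ∈ Finset.Ico 1 f, p ^ j) (hνp : ν = p * νp)
    (α h ε : ℤ → ℤ)
    (hαper : ∀ i, α (i + 2 * f) = α i)
    (hhper : ∀ i, h (i + 2 * f) = h i)
    (hαbound : ∀ i, 0 ≤ α i ∧ α i ≤ e - 1)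
    (hhbound : ∀ i, 0 ≤ h i ∧ h i ≤ p - 1)
    (hhf : ∀ i, h (i + f) = p - 1 - h i)
    (hε : ∀ i, ε i = if h i = p - 1 then 1 else 0)
    (hcong : ∀ i, α (i + 1) ≡ p * α i + h i [ZMOD e])
    (heq : ∀ i, α i ≤ (p - 1) * νp - ε i → α (i + 1) = p * α i + h i) :
    ∀ i, νp + ε (i + f) ≤ α i → α i < (p - 1) * νp - ε i →
      ν < α (i + 1) ∧ α (i + 1) < e :=
  stmt_3_general p hp f hf e ν νp he hν hνp α h ε hhbound hhf hε heq
end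

section
/- With the same setup, if ν < α_{i+1} < e (i.e. X_{i+1} = O) then either ν < α_i < e or ν/p + ε_{i+f} ≤ α_i < (p−1)ν/p − ε_i (i.e. X_i ∈ {O, AB}). -/
/-!
Write `X = (p-1)ν/p - ε_i`. Below `X` the step is `α_{i+1} = pα_i + h_i`, and `α_{i+1} > ν = p(ν/p)`
forces `α_i ≥ ν/p`, with `α_i > ν/p` when `h_i = 0`, i.e. when `ε_{i+f} = 1`. Above `X` with
`α_i ≤ ν` the step is `pα_i + h_i - e ≤ pν + p - 1 - e = ν`, since `(p-1)ν = p^f - p`. At `α_i = X`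
itself `pα_i + h_i` already lies in `[0, e)`, so the congruence forces the first kind of step,
contradicting the characterisation of when it occurs.
-/

theorem Int.ModEq.eq_of_nonneg_of_lt {n a b : ℤ} (h : a ≡ b [ZMOD n]) (ha₀ : 0 ≤ a) (ha : a < n)
    (hb₀ : 0 ≤ b) (hb : b < n) : a = b := by
  rwa [Int.ModEq, Int.emod_eq_of_lt ha₀ ha, Int.emod_eq_of_lt hb₀ hb] at h

theorem Int.add_ite_le_of_mul_lt_mul_add {p q a d : ℤ} (hp : 0 < p) (hd : d < p)
    (h : p * q < p * a + d) : q + (if d = 0 then 1 else 0) ≤ a := by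
  split_ifs with hd₀
  · rw [hd₀, add_zero] at h
    linarith [lt_of_mul_lt_mul_left h hp.le]
  · have : p * q < p * (a + 1) := by linarith
    linarith [lt_of_mul_lt_mul_left this hp.le]

theorem Int.sub_mul_ite_le_sub_two {p d : ℤ} (hd₀ : 0 ≤ d) (hd : d ≤ p - 1) :
    d - p * (if d = p - 1 then 1 else 0) ≤ p - 2 := by
  split_ifs with hd₁ <;> omega

theorem stmt_4_general (p : ℤ) (hp : 5 ≤ p) (f : ℕ) (hf : 2 ≤ f)
    (e ν νp : ℤ) (he : e = p ^ f - 1)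
    (hν : ν = ∑ j ∈ Finset.Ico 1 f, p ^ j) (hνp : ν = p * νp)
    (α h ε : ℤ → ℤ)
    (hαbound : ∀ i, 0 ≤ α i ∧ α i ≤ e - 1)
    (hhbound : ∀ i, 0 ≤ h i ∧ h i ≤ p - 1)
    (hhf : ∀ i, h (i + f) = p - 1 - h i)
    (hε : ∀ i, ε i = if h i = p - 1 then 1 else 0)
    (hcong : ∀ i, α (i + 1) ≡ p * α i + h i [ZMOD e])
    (heq : ∀ i, α (i + 1) = p * α i + h i ↔ α i < (p - 1) * νp - ε i)
    (heq' : ∀ i, (p - 1) * νp - ε i < α i → α i ≤ ν → α (i + 1) = p * α i + h i - e) :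
    ∀ i, ν < α (i + 1) → α (i + 1) < e →
      (ν < α i ∧ α i < e) ∨ (νp + ε (i + f) ≤ α i ∧ α i < (p - 1) * νp - ε i) := by
  intro i hν_lt hlt_e
  have hgeom : ν * (p - 1) = e + 1 - p := by
    rw [hν, he, geom_sum_Ico_mul p (by omega), pow_one]; ring
  obtain ⟨hh₀, hh⟩ := hhbound i
  obtain ⟨hα₀, hα⟩ := hαbound i
  rcases lt_trichotomy (α i) ((p - 1) * νp - ε i) with hA | hX | hC
  · have hεf : ε (i + f) = if h i = 0 then 1 else 0 := by simp only [hε, hhf, sub_eq_self]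
    refine Or.inr ⟨?_, hA⟩
    rw [hνp, (heq i).2 hA] at hν_lt
    rw [hεf]
    exact Int.add_ite_le_of_mul_lt_mul_add (by omega) (by omega) hν_lt
  · have hpα : p * α i = e + 1 - p - p * ε i := by
      rw [hX]; linear_combination hgeom - (p - 1) * hνp
    have hstep_lt : p * α i + h i < e := by
      linarith [hε i ▸ Int.sub_mul_ite_le_sub_two hh₀ hh]
    have hstep : α (i + 1) = p * α i + h i :=
      (hcong i).eq_of_nonneg_of_lt (hαbound _).1 hlt_e
        (add_nonneg (mul_nonneg (by omega) hα₀) hh₀) hstep_lt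
    exact absurd ((heq i).1 hstep) hX.not_lt
  · by_cases hνα : ν < α i
    · exact Or.inl ⟨hνα, by linarith⟩
    · have hwrap := heq' i hC (not_lt.1 hνα)
      have hpα : p * α i ≤ p * ν := mul_le_mul_of_nonneg_left (not_lt.1 hνα) (by omega)
      linarith

/-- Lemma 2.1.4 (ii), abstract form: if `X_{i+1} = O`, i.e. `ν < α_{i+1} < e`,
then `X_i ∈ {O, AB}`, i.e. `ν < α_i < e` or `ν/p + ε_{i+f} ≤ α_i < (p-1)ν/p - ε_i`. -/
theorem stmt_4 (p : ℤ) (hp : 5 ≤ p) (f : ℕ) (hf : 2 ≤ f)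
    (e ν νp : ℤ) (he : e = p ^ f - 1)
    (hν : ν = ∑ j ∈ Finset.Ico 1 f, p ^ j) (hνp : ν = p * νp)
    (α h ε : ℤ → ℤ)
    (hαper : ∀ i, α (i + 2 * f) = α i)
    (hhper : ∀ i, h (i + 2 * f) = h i)
    (hαbound : ∀ i, 0 ≤ α i ∧ α i ≤ e - 1)
    (hhbound : ∀ i, 0 ≤ h i ∧ h i ≤ p - 1)
    (hhf : ∀ i, h (i + f) = p - 1 - h i)
    (hε : ∀ i, ε i = if h i = p - 1 then 1 else 0)
    (hcong : ∀ i, α (i + 1) ≡ p * α i + h i [ZMOD e])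
    (heq : ∀ i, α (i + 1) = p * α i + h i ↔ α i < (p - 1) * νp - ε i)
    (heq' : ∀ i, (p - 1) * νp - ε i < α i → α i ≤ ν → α (i + 1) = p * α i + h i - e) :
    ∀ i, ν < α (i + 1) → α (i + 1) < e →
      (ν < α i ∧ α i < e) ∨ (νp + ε (i + f) ≤ α i ∧ α i < (p - 1) * νp - ε i) :=
  stmt_4_general p hp f hf e ν νp he hν hνp α h ε hαbound hhbound hhf hε hcong heq heq'
end

section
/- Let p ≥ 5, f ≥ 2, e = p^f − 1, ν = p + ⋯ + p^{f−1}. If (α_i) is a 2f-periodic integer sequence satisfying α_{i+1} + α_{i+f+1} − ν = p·(α_i + α_{i+f} − ν) for all i, and |α_i + α_{i+f} − ν| < ν/p + 1 for all i, then α_i + α_{i+f} = ν for all i. -/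
/-! A sequence multiplied by `p` at each step gets multiplied by `p ^ n` over `n` steps; if it is
also `n`-periodic, each term satisfies `x = p ^ n * x`, which forces `x = 0` once `p ^ n ≠ 1`.
Here the sequence is `α i + α (i + f) - ν`, which inherits period `2f` from `α`. -/

section GeometricSequence

variable {R : Type*} {p : R} {b : ℤ → R}

theorem add_natCast_eq_pow_mul_of_succ_eq_mul [Monoid R] (hb : ∀ i, b (i + 1) = p * b i)
    (n : ℕ) (i : ℤ) : b (i + n) = p ^ n * b i := by
  induction n with
  | zero => simp
  | succ k ih => rw [Nat.cast_succ, ← add_assoc, hb, ih, pow_succ', mul_assoc]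

theorem eq_zero_of_periodic_of_succ_eq_mul [Ring R] [NoZeroDivisors R] {n : ℕ}
    (hpn : p ^ n ≠ 1) (hper : Function.Periodic b n) (hb : ∀ i, b (i + 1) = p * b i)
    (i : ℤ) : b i = 0 := by
  have hfix : (p ^ n - 1) * b i = 0 := by
    rw [sub_mul, one_mul, ← add_natCast_eq_pow_mul_of_succ_eq_mul hb, hper, sub_self]
  exact (mul_eq_zero.mp hfix).resolve_left (sub_ne_zero.mpr hpn)

end GeometricSequence

theorem stmt_7_general (p : ℤ) (hp : 5 ≤ p) (f : ℕ) (hf : 2 ≤ f)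
    (ν : ℤ)
    (α : ℤ → ℤ)
    (hαper : ∀ i, α (i + 2 * f) = α i)
    (hrec : ∀ i, α (i + 1) + α (i + f + 1) - ν = p * (α i + α (i + f) - ν)) :
    ∀ i, α i + α (i + f) = ν := by
  set b : ℤ → ℤ := fun i => α i + α (i + f) - ν
  have hper : Function.Periodic b (2 * f : ℕ) := fun i => by
    simp only [b, Nat.cast_mul, Nat.cast_ofNat, add_right_comm i, hαper]
  have hstep : ∀ i, b (i + 1) = p * b i := fun i => by
    simp only [b, add_right_comm i 1, hrec]
  have hpow : p ^ (2 * f) ≠ 1 := (one_lt_pow₀ (by omega) (by omega)).ne'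
  intro i
  have := eq_zero_of_periodic_of_succ_eq_mul hpow hper hstep i
  simp only [b] at this
  omega

/-- Key estimate in Lemma 2.1.6: if `α_{i+1} + α_{i+f+1} - ν = p (α_i + α_{i+f} - ν)`
for all `i` and `|α_i + α_{i+f} - ν| < ν/p + 1` for all `i`, then `α_i + α_{i+f} = ν`. -/
theorem stmt_7 (p : ℤ) (hp : 5 ≤ p) (f : ℕ) (hf : 2 ≤ f)
    (ν νp : ℤ) (hν : ν = ∑ j ∈ Finset.Ico 1 f, p ^ j) (hνp : ν = p * νp)
    (α : ℤ → ℤ)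
    (hαper : ∀ i, α (i + 2 * f) = α i)
    (hrec : ∀ i, α (i + 1) + α (i + f + 1) - ν = p * (α i + α (i + f) - ν))
    (hbound : ∀ i, |α i + α (i + f) - ν| < νp + 1) :
    ∀ i, α i + α (i + f) = ν :=
  stmt_7_general p hp f hf ν α hαper hrec
end
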